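/- Let n ≥ 5. The set V is invariant under every element of the toric-reverse group D_{n+1}, and D_{n+1} acts sharply transitively on V: for all u, v ∈ V there exists exactly one d ∈ D_{n+1} with d(u) = v. -/

import Mathlib

/-- Auxiliary function: the action of the block transposition with cut points
`(i,j,k)` on `{1,…,n}`, written 1-based. -/
def btFun (i j k t : ℕ) : ℕ :=
  if t ≤ i ∨ k < t then t
  else if t ≤ k - j + i then t + j - i
  else t + j - k

theorem btFun_lb {i j k t : ℕ} (h1 : 1 ≤ t) : 1 ≤ btFun i j k t := by
  unfold btFun; split_ifs <;> omega

theorem btFun_ub {i j k t n : ℕ} (ht : t ≤ n) (hjk : j ≤ k) (hkn : k ≤ n) :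
    btFun i j k t ≤ n := by
  unfold btFun; split_ifs <;> omega

theorem btFun_inv {i j k : ℕ} (hij : i < j) (hjk : j < k) (t : ℕ) :
    btFun i (k - j + i) k (btFun i j k t) = t := by
  unfold btFun; split_ifs <;> omega

theorem btFun_inv' {i j k : ℕ} (hij : i < j) (hjk : j < k) (t : ℕ) :
    btFun i j k (btFun i (k - j + i) k t) = t := by
  have h := btFun_inv (i := i) (j := k - j + i) (k := k) (by omega) (by omega) t
  have e : k - (k - j + i) + i = j := by omega
  rwa [e] at h

/-- The block transposition `σ(i,j,k)` as a permutation of `Fin n`,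
where `t : Fin n` encodes the element `t.val + 1` of `{1,…,n}`. -/
def blockT (n i j k : ℕ) (hij : i < j) (hjk : j < k) (hkn : k ≤ n) :
    Equiv.Perm (Fin n) where
  toFun t := ⟨btFun i j k (t.1 + 1) - 1, by
    have h0 := t.isLt
    have h1 := btFun_lb (i := i) (j := j) (k := k) (t := t.1 + 1) (by omega)
    have h2 := btFun_ub (i := i) (j := j) (k := k) (t := t.1 + 1) (n := n)
      (by omega) (by omega) hkn
    omega⟩
  invFun t := ⟨btFun i (k - j + i) k (t.1 + 1) - 1, by
    have h0 := t.isLt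
    have h1 := btFun_lb (i := i) (j := k - j + i) (k := k) (t := t.1 + 1) (by omega)
    have h2 := btFun_ub (i := i) (j := k - j + i) (k := k) (t := t.1 + 1) (n := n)
      (by omega) (by omega) hkn
    omega⟩
  left_inv t := by
    have h1 := btFun_lb (i := i) (j := j) (k := k) (t := t.1 + 1) (by omega)
    have h2 := btFun_inv hij hjk (t.1 + 1)
    apply Fin.ext
    simp only
    have h3 : btFun i j k (t.1 + 1) - 1 + 1 = btFun i j k (t.1 + 1) := by omega
    rw [h3, h2]
    omega
  right_inv t := by
    have h1 := btFun_lb (i := i) (j := k - j + i) (k := k) (t := t.1 + 1) (by omega)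
    have h2 := btFun_inv' hij hjk (t.1 + 1)
    apply Fin.ext
    simp only
    have h3 : btFun i (k - j + i) k (t.1 + 1) - 1 + 1 = btFun i (k - j + i) k (t.1 + 1) := by
      omega
    rw [h3, h2]
    omega

/-- `T_n`: the set of all block transpositions on `{1,…,n}`. -/
def blockTranspositions (n : ℕ) : Set (Equiv.Perm (Fin n)) :=
  {π | ∃ (i j k : ℕ) (hij : i < j) (hjk : j < k) (hkn : k ≤ n),
      blockT n i j k hij hjk hkn = π}

theorem blockT_inv {n i j k : ℕ} (hij : i < j) (hjk : j < k) (hkn : k ≤ n) :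
    (blockT n i j k hij hjk hkn)⁻¹
      = blockT n i (k - j + i) k (by omega) (by omega) hkn :=
  Equiv.ext fun _ => rfl

theorem blockTranspositions_inv_mem {n : ℕ} {π : Equiv.Perm (Fin n)}
    (h : π ∈ blockTranspositions n) : π⁻¹ ∈ blockTranspositions n := by
  obtain ⟨i, j, k, hij, hjk, hkn, rfl⟩ := h
  exact ⟨i, k - j + i, k, by omega, by omega, hkn, (blockT_inv hij hjk hkn).symm⟩

/-- The Cayley graph `Cay(Sym_n, T_n)`. -/
def cayleyT (n : ℕ) : SimpleGraph (Equiv.Perm (Fin n)) where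
  Adj π ρ := π ≠ ρ ∧ π⁻¹ * ρ ∈ blockTranspositions n
  symm := ⟨by
    rintro π ρ ⟨hne, hmem⟩
    refine ⟨hne.symm, ?_⟩
    have h := blockTranspositions_inv_mem hmem
    rwa [mul_inv_rev, inv_inv] at h⟩
  loopless := ⟨fun π h => h.1 rfl⟩

def ext0 {n : ℕ} (π : Equiv.Perm (Fin n)) : Equiv.Perm (Fin (n + 1)) where
  toFun x := Fin.cases 0 (fun t => (π t).succ) x
  invFun x := Fin.cases 0 (fun t => (π⁻¹ t).succ) x
  left_inv x := by
    cases x using Fin.cases with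
    | zero => simp
    | succ t => simp
  right_inv x := by
    cases x using Fin.cases with
    | zero => simp
    | succ t => simp

theorem ext0_zero {n : ℕ} (π : Equiv.Perm (Fin n)) : ext0 π 0 = 0 := by
  simp [ext0]

open Fin.NatCast in
theorem finRotate_pow_apply {n : ℕ} (m : ℕ) (x : Fin (n + 1)) :
    ((finRotate (n + 1)) ^ m) x = x + (m : Fin (n + 1)) := by
  induction m with
  | zero => simp
  | succ m ih =>
      rw [pow_succ', Equiv.Perm.mul_apply, finRotate_succ_apply, ih]
      rw [Nat.cast_succ, add_assoc]

open Fin.NatCast in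
/-- The auxiliary permutation `α^(n+1-r) ∘ [0 π] ∘ α^(π⁻¹(r))` of `{0,1,…,n}`. -/
def toricAux (n r : ℕ) (π : Equiv.Perm (Fin n)) : Equiv.Perm (Fin (n + 1)) :=
  (finRotate (n + 1)) ^ (n + 1 - r) * ext0 π *
    (finRotate (n + 1)) ^ (((ext0 π)⁻¹ (r : Fin (n + 1))) : ℕ)

open Fin.NatCast in
theorem toricAux_apply_zero (n r : ℕ) (hr : r ≤ n) (π : Equiv.Perm (Fin n)) :
    toricAux n r π 0 = 0 := by
  unfold toricAux
  have h : r + (n + 1 - r) = n + 1 := by omega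
  rw [Equiv.Perm.mul_apply, Equiv.Perm.mul_apply, finRotate_pow_apply,
    finRotate_pow_apply, zero_add, Fin.cast_val_eq_self,
    ← Equiv.Perm.mul_apply, mul_inv_cancel, Equiv.Perm.one_apply, ← Nat.cast_add, h, Fin.natCast_self]

/-- Restriction of a permutation of `{0,1,…,n}` fixing `0` to a permutation of `{1,…,n}`. -/
def unext0 {n : ℕ} (τ : Equiv.Perm (Fin (n + 1))) (h : τ 0 = 0) : Equiv.Perm (Fin n) where
  toFun t := (τ t.succ).pred (by
    intro hc
    exact Fin.succ_ne_zero t (τ.injective (hc.trans h.symm)))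
  invFun t := (τ⁻¹ t.succ).pred (by
    intro hc
    have h' : τ⁻¹ 0 = 0 := by
      conv_lhs => rw [← h]
      exact τ.symm_apply_apply 0
    exact Fin.succ_ne_zero t (τ⁻¹.injective (hc.trans h'.symm)))
  left_inv t := by
    apply Fin.succ_injective
    rw [Fin.succ_pred, Fin.succ_pred, ← Equiv.Perm.mul_apply, inv_mul_cancel, Equiv.Perm.one_apply]
  right_inv t := by
    apply Fin.succ_injective
    rw [Fin.succ_pred, Fin.succ_pred, ← Equiv.Perm.mul_apply, mul_inv_cancel, Equiv.Perm.one_apply]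

/-- The toric map `f̄_r` on `Sym_n`. -/
def toricMap (n r : ℕ) (hr : r ≤ n) (π : Equiv.Perm (Fin n)) : Equiv.Perm (Fin n) :=
  unext0 (toricAux n r π) (toricAux_apply_zero n r hr π)

/-- The reversal `w : t ↦ n+1-t` of `{1,…,n}`, in the `Fin n` encoding. -/
def wrev (n : ℕ) : Equiv.Perm (Fin n) where
  toFun t := ⟨n - 1 - t.val, by have := t.isLt; omega⟩
  invFun t := ⟨n - 1 - t.val, by have := t.isLt; omega⟩
  left_inv t := by
    have := t.isLt
    apply Fin.ext
    simp only
    omega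
  right_inv t := by
    have := t.isLt
    apply Fin.ext
    simp only
    omega

theorem wrev_wrev {n : ℕ} (t : Fin n) : wrev n (wrev n t) = t := by
  have := t.isLt
  apply Fin.ext
  simp only [wrev, Equiv.coe_fn_mk]
  omega

/-- The reverse map `g` on `Sym_n`: `g(π) = w ∘ π ∘ w`,
i.e. `(g π)(t) = n+1-π(n+1-t)` in 1-based notation. -/
def revMap {n : ℕ} (π : Equiv.Perm (Fin n)) : Equiv.Perm (Fin n) :=
  wrev n * π * wrev n

theorem revMap_revMap {n : ℕ} (π : Equiv.Perm (Fin n)) : revMap (revMap π) = π := by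
  ext t
  simp only [revMap, Equiv.Perm.mul_apply]
  rw [wrev_wrev, wrev_wrev]

theorem ext0_injective {n : ℕ} : Function.Injective (ext0 (n := n)) := by
  intro π1 π2 h
  ext t
  have h2 : ext0 π1 t.succ = ext0 π2 t.succ := by rw [h]
  simp only [ext0, Equiv.coe_fn_mk, Fin.cases_succ] at h2
  exact congrArg Fin.val (Fin.succ_injective _ h2)

theorem unext0_inj {n : ℕ} {τ1 τ2 : Equiv.Perm (Fin (n + 1))} {h1 : τ1 0 = 0}
    {h2 : τ2 0 = 0} (h : unext0 τ1 h1 = unext0 τ2 h2) : τ1 = τ2 := by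
  ext x
  cases x using Fin.cases with
  | zero => rw [h1, h2]
  | succ t =>
      have hfun : (unext0 τ1 h1) t = (unext0 τ2 h2) t := by rw [h]
      have hne1 : τ1 t.succ ≠ 0 := fun hc => Fin.succ_ne_zero t (τ1.injective (hc.trans h1.symm))
      have hne2 : τ2 t.succ ≠ 0 := fun hc => Fin.succ_ne_zero t (τ2.injective (hc.trans h2.symm))
      have e1 : ((unext0 τ1 h1) t).succ = τ1 t.succ := by
        show ((τ1 t.succ).pred hne1).succ = τ1 t.succ
        exact Fin.succ_pred _ _
      have e2 : ((unext0 τ2 h2) t).succ = τ2 t.succ := by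
        show ((τ2 t.succ).pred hne2).succ = τ2 t.succ
        exact Fin.succ_pred _ _
      rw [← e1, ← e2, hfun]

open Fin.NatCast in
theorem toricMap_injective (n r : ℕ) (hr : r ≤ n) :
    Function.Injective (toricMap n r hr) := by
  intro π1 π2 h
  have h' : toricAux n r π1 = toricAux n r π2 := unext0_inj h
  unfold toricAux at h'
  rw [mul_assoc, mul_assoc] at h'
  have h'' := mul_left_cancel h'
  set c1 : ℕ := (((ext0 π1)⁻¹ (r : Fin (n + 1))) : ℕ) with hc1
  set c2 : ℕ := (((ext0 π2)⁻¹ (r : Fin (n + 1))) : ℕ) with hc2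
  have happ := congrArg (fun (e : Equiv.Perm (Fin (n + 1))) => e (-(c1 : Fin (n + 1)))) h''
  simp only [Equiv.Perm.mul_apply, finRotate_pow_apply] at happ
  rw [neg_add_cancel, ext0_zero] at happ
  have hz : (-(c1 : Fin (n + 1)) + (c2 : Fin (n + 1))) = 0 :=
    (ext0 π2).injective (by rw [← happ, ext0_zero])
  have hcc : (c1 : Fin (n + 1)) = (c2 : Fin (n + 1)) := by
    have := neg_add_eq_zero.mp hz
    exact this
  have hpow : (finRotate (n + 1)) ^ c1 = (finRotate (n + 1)) ^ c2 := by
    ext x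
    rw [finRotate_pow_apply, finRotate_pow_apply, hcc]
  rw [hpow] at h''
  exact ext0_injective (mul_right_cancel h'')

/-- The toric map `f̄ = f̄_1` as a permutation of the set `Sym_n`. -/
noncomputable def toricEquiv (n : ℕ) (hn : 1 ≤ n) : Equiv.Perm (Equiv.Perm (Fin n)) :=
  Equiv.ofBijective (toricMap n 1 hn)
    (Finite.injective_iff_bijective.mp (toricMap_injective n 1 hn))

/-- The reverse map `g` as a permutation of the set `Sym_n`. -/
def revEquiv (n : ℕ) : Equiv.Perm (Equiv.Perm (Fin n)) where
  toFun := revMap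
  invFun := revMap
  left_inv := revMap_revMap
  right_inv := revMap_revMap

/-- The toric-reverse group `D_{n+1}`: the group of permutations of the set `Sym_n`
generated by the toric map `f̄` and the reverse map `g`. -/
def toricReverseGroup (n : ℕ) (hn : 1 ≤ n) :
    Subgroup (Equiv.Perm (Equiv.Perm (Fin n))) :=
  Subgroup.closure {toricEquiv n hn, revEquiv n}

/-- The automorphism group of a simple graph, as a subgroup of the group of
permutations of its vertex set. -/
def graphAut {V : Type*} (G : SimpleGraph V) : Subgroup (Equiv.Perm V) where
  carrier := {e | ∀ u v, G.Adj (e u) (e v) ↔ G.Adj u v}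
  one_mem' := by intro u v; simp
  mul_mem' := by
    intro a b ha hb u v
    rw [Equiv.Perm.mul_apply, Equiv.Perm.mul_apply, ha, hb]
  inv_mem' := by
    intro a ha u v
    conv_rhs => rw [← (show a (a⁻¹ u) = u by rw [← Equiv.Perm.mul_apply, mul_inv_cancel, Equiv.Perm.one_apply]),
      ← (show a (a⁻¹ v) = v by rw [← Equiv.Perm.mul_apply, mul_inv_cancel, Equiv.Perm.one_apply])]
    rw [ha]
/-- The pair `e_m`, `0 ≤ m ≤ n`. -/
def epair (n : ℕ) (hn : 5 ≤ n) (m : ℕ) (hm : m ≤ n) : Set (Equiv.Perm (Fin n)) :=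
  if h : m ≤ n - 3 then
    {blockT n m (m + 1) (m + 3) (by omega) (by omega) (by omega),
     blockT n m (m + 2) (m + 3) (by omega) (by omega) (by omega)}
  else if h2 : m = n - 2 then
    {blockT n 0 (n - 2) (n - 1) (by omega) (by omega) (by omega),
     blockT n 0 (n - 2) n (by omega) (by omega) (by omega)}
  else if h3 : m = n - 1 then
    {blockT n 1 (n - 1) n (by omega) (by omega) (by omega),
     blockT n 0 1 (n - 1) (by omega) (by omega) (by omega)}
  else
    {blockT n 0 2 n (by omega) (by omega) (by omega),
     blockT n 1 2 n (by omega) (by omega) (by omega)}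

/-- `V`: the set of the `2(n+1)` endpoints of the pairs `e_0, …, e_n`. -/
def Vset (n : ℕ) (hn : 5 ≤ n) : Set (Equiv.Perm (Fin n)) :=
  {π | ∃ (m : ℕ) (hm : m ≤ n), π ∈ epair n hn m hm}

/-!
Both generators act on block transpositions through their cut points: the toric map `f̄`
lowers the cut points `i < j < k` by one modulo `n + 1` (re-sorting them), and `g` reflects
them to `n - k < n - j < n - i`. Labelling the two endpoints of `e_m` by
`(m, s) ∈ ℤ/(n+1) × Bool`, `f̄` therefore acts on `V` as `(m, s) ↦ (m - 1, s)` and `g` as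
`(m, s) ↦ (n - 3 - m, ¬s)`. Since `f̄ ^ (n+1) = g ^ 2 = 1` and `g f̄ g = f̄⁻¹` on all of `Sym_n`,
every element of `D_{n+1}` is `f̄ ^ i` or `f̄ ^ i g`: the former translate the labels, the latter
flip `s`, so only the identity fixes a point of `V`, while translations and `g` reach every
label.
-/

section DihedralAction

variable {G : Type*} [Group G] {f g : G}

theorem mul_zpow_eq_zpow_neg_mul_of_dihedral (hg : g * g = 1) (hgf : g * f * g = f⁻¹) (i : ℤ) :
    g * f ^ i = f ^ (-i) * g := by
  have hg' : g⁻¹ = g := inv_eq_of_mul_eq_one_right hg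
  calc g * f ^ i = (g * f * g⁻¹) ^ i * g := by rw [conj_zpow]; group
    _ = f ^ (-i) * g := by rw [hg', hgf, inv_zpow']

theorem exists_zpow_or_zpow_mul_of_mem_closure_pair (hg : g * g = 1) (hgf : g * f * g = f⁻¹)
    {d : G} (hd : d ∈ Subgroup.closure {f, g}) : ∃ i : ℤ, d = f ^ i ∨ d = f ^ i * g := by
  have hcomm := mul_zpow_eq_zpow_neg_mul_of_dihedral hg hgf
  induction hd using Subgroup.closure_induction with
  | mem x hx =>
    rcases hx with rfl | rfl
    · exact ⟨1, .inl (zpow_one x).symm⟩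
    · exact ⟨0, .inr (by rw [zpow_zero, one_mul])⟩
  | one => exact ⟨0, .inl (zpow_zero f).symm⟩
  | mul x y _ _ hx hy =>
    obtain ⟨i, rfl | rfl⟩ := hx <;> obtain ⟨j, rfl | rfl⟩ := hy
    · exact ⟨i + j, .inl (zpow_add f i j).symm⟩
    · exact ⟨i + j, .inr (by rw [zpow_add, mul_assoc])⟩
    · exact ⟨i - j, .inr (by
        rw [mul_assoc, hcomm, ← mul_assoc, ← zpow_add, sub_eq_add_neg])⟩
    · exact ⟨i - j, .inl (by
        rw [mul_assoc, ← mul_assoc g, hcomm, mul_assoc, hg, mul_one, ← zpow_add,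
          sub_eq_add_neg])⟩
  | inv x _ hx =>
    obtain ⟨i, rfl | rfl⟩ := hx
    · exact ⟨-i, .inl (zpow_neg f i).symm⟩
    · exact ⟨i, .inr (by
        rw [mul_inv_rev, inv_eq_of_mul_eq_one_right hg, ← zpow_neg, hcomm, neg_neg])⟩

variable {X : Type*} [MulAction G X] {N : ℕ} {v : ZMod N × Bool → X} {c : ZMod N}

theorem zpow_smul_eq_of_smul_eq_sub_one (hvf : ∀ m s, f • v (m, s) = v (m - 1, s)) (i : ℤ)
    (m : ZMod N) (s : Bool) : f ^ i • v (m, s) = v (m - i, s) := by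
  induction i using Int.induction_on generalizing m with
  | zero => simp
  | succ i ih => rw [zpow_add_one, mul_smul, hvf, ih]; push_cast; ring_nf
  | pred i ih =>
    have hinv : f⁻¹ • v (m, s) = v (m + 1, s) := by
      rw [inv_smul_eq_iff, hvf, add_sub_cancel_right]
    rw [zpow_sub_one, mul_smul, hinv, ih]; push_cast; ring_nf

theorem smul_mem_range_of_mem_closure_pair (hg : g * g = 1) (hgf : g * f * g = f⁻¹)
    (hvf : ∀ m s, f • v (m, s) = v (m - 1, s)) (hvg : ∀ m s, g • v (m, s) = v (c - m, !s))
    {d : G} (hd : d ∈ Subgroup.closure {f, g}) {x : X} (hx : x ∈ Set.range v) :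
    d • x ∈ Set.range v := by
  obtain ⟨⟨m, s⟩, rfl⟩ := hx
  obtain ⟨i, rfl | rfl⟩ := exists_zpow_or_zpow_mul_of_mem_closure_pair hg hgf hd
  · exact ⟨_, (zpow_smul_eq_of_smul_eq_sub_one hvf i m s).symm⟩
  · exact ⟨_, by rw [mul_smul, hvg, zpow_smul_eq_of_smul_eq_sub_one hvf]⟩

theorem exists_mem_closure_pair_smul_eq (hvf : ∀ m s, f • v (m, s) = v (m - 1, s))
    (hvg : ∀ m s, g • v (m, s) = v (c - m, !s)) (p q : ZMod N × Bool) :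
    ∃ d ∈ Subgroup.closure {f, g}, d • v p = v q := by
  obtain ⟨m, s⟩ := p
  obtain ⟨m', s'⟩ := q
  have hf : f ∈ Subgroup.closure {f, g} := Subgroup.subset_closure (by simp)
  have hg : g ∈ Subgroup.closure {f, g} := Subgroup.subset_closure (by simp)
  by_cases hs : s = s'
  · obtain ⟨i, hi⟩ := ZMod.intCast_surjective (m - m')
    refine ⟨f ^ i, Subgroup.zpow_mem _ hf i, ?_⟩
    rw [zpow_smul_eq_of_smul_eq_sub_one hvf, hi, sub_sub_cancel, hs]
  · obtain ⟨i, hi⟩ := ZMod.intCast_surjective (c - m - m')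
    refine ⟨f ^ i * g, Subgroup.mul_mem _ (Subgroup.zpow_mem _ hf i) hg, ?_⟩
    rw [mul_smul, hvg, zpow_smul_eq_of_smul_eq_sub_one hvf, hi, sub_sub_cancel,
      Bool.eq_not.mpr hs, Bool.not_not]

theorem eq_one_of_mem_closure_pair_of_smul_eq (hf : f ^ N = 1) (hg : g * g = 1)
    (hgf : g * f * g = f⁻¹) (hvf : ∀ m s, f • v (m, s) = v (m - 1, s))
    (hvg : ∀ m s, g • v (m, s) = v (c - m, !s)) (hv : Function.Injective v)
    {d : G} (hd : d ∈ Subgroup.closure {f, g}) {p : ZMod N × Bool} (hp : d • v p = v p) :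
    d = 1 := by
  obtain ⟨m, s⟩ := p
  obtain ⟨i, rfl | rfl⟩ := exists_zpow_or_zpow_mul_of_mem_closure_pair hg hgf hd
  · rw [zpow_smul_eq_of_smul_eq_sub_one hvf] at hp
    have hi : (i : ZMod N) = 0 := by simpa using congrArg Prod.fst (hv hp)
    obtain ⟨k, rfl⟩ := (ZMod.intCast_zmod_eq_zero_iff_dvd i N).mp hi
    rw [zpow_mul, zpow_natCast, hf, one_zpow]
  · rw [mul_smul, hvg, zpow_smul_eq_of_smul_eq_sub_one hvf] at hp
    exact absurd (congrArg Prod.snd (hv hp)) (Bool.not_ne_self s)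

theorem existsUnique_mem_closure_pair_smul_eq (hf : f ^ N = 1) (hg : g * g = 1)
    (hgf : g * f * g = f⁻¹) (hvf : ∀ m s, f • v (m, s) = v (m - 1, s))
    (hvg : ∀ m s, g • v (m, s) = v (c - m, !s)) (hv : Function.Injective v)
    {x y : X} (hx : x ∈ Set.range v) (hy : y ∈ Set.range v) :
    ∃! d : Subgroup.closure {f, g}, (d : G) • x = y := by
  obtain ⟨p, rfl⟩ := hx
  obtain ⟨q, rfl⟩ := hy
  obtain ⟨d, hd, hdpq⟩ := exists_mem_closure_pair_smul_eq hvf hvg p q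
  refine ⟨⟨d, hd⟩, hdpq, fun e he => Subtype.ext ?_⟩
  have hfix : (d⁻¹ * e) • v p = v p := by rw [mul_smul, he, ← hdpq, inv_smul_smul]
  have := eq_one_of_mem_closure_pair_of_smul_eq hf hg hgf hvf hvg hv
    (Subgroup.mul_mem _ (Subgroup.inv_mem _ hd) e.2) hfix
  exact (inv_mul_eq_one.mp this).symm

end DihedralAction

section ToricMap

open Fin.NatCast Fin.CommRing

variable {n : ℕ}

theorem ext0_succ (π : Equiv.Perm (Fin n)) (t : Fin n) : ext0 π t.succ = (π t).succ := by
  simp [ext0]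

theorem ext0_mul (π ρ : Equiv.Perm (Fin n)) : ext0 (π * ρ) = ext0 π * ext0 ρ := by
  ext x
  cases x using Fin.cases <;> simp [ext0_zero, ext0_succ]

theorem ext0_unext0 (τ : Equiv.Perm (Fin (n + 1))) (h : τ 0 = 0) : ext0 (unext0 τ h) = τ := by
  ext1 x
  cases x using Fin.cases with
  | zero => rw [ext0_zero, h]
  | succ t => simp [ext0_succ, unext0]

theorem ext0_wrev (y : Fin (n + 1)) : ext0 (wrev n) y = -y := by
  cases y using Fin.cases with
  | zero => rw [ext0_zero, neg_zero]
  | succ t =>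
    rw [ext0_succ, eq_neg_iff_add_eq_zero]
    ext
    simp only [Fin.val_add, Fin.val_succ, wrev, Equiv.coe_fn_mk, Fin.val_zero]
    rw [show n - 1 - t.val + 1 + (t.val + 1) = n + 1 by omega, Nat.mod_self]

theorem ext0_revMap_apply (π : Equiv.Perm (Fin n)) (y : Fin (n + 1)) :
    ext0 (revMap π) y = -ext0 π (-y) := by
  rw [revMap, ext0_mul, ext0_mul, Equiv.Perm.mul_apply, Equiv.Perm.mul_apply, ext0_wrev,
    ext0_wrev]

theorem ext0_toricMap_one_apply (h : 1 ≤ n) (π : Equiv.Perm (Fin n)) (x : Fin (n + 1)) :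
    ext0 (toricMap n 1 h π) x = ext0 π (x + (ext0 π)⁻¹ 1) - 1 := by
  have hn : ((n : ℕ) : Fin (n + 1)) = -1 := eq_neg_of_add_eq_zero_left (by simp)
  rw [toricMap, ext0_unext0, toricAux, Equiv.Perm.mul_apply, Equiv.Perm.mul_apply,
    finRotate_pow_apply, finRotate_pow_apply, Nat.cast_one, Fin.cast_val_eq_self,
    Nat.add_sub_cancel, hn, sub_eq_add_neg]

theorem toricMap_one_eq_of_ext0 (h : 1 ≤ n) {π ρ : Equiv.Perm (Fin n)} (b : Fin (n + 1))
    (hb : ∀ x, ext0 π (x + b) = ext0 ρ x + 1) : toricMap n 1 h π = ρ := by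
  have hb1 : (ext0 π)⁻¹ 1 = b := by
    rw [Equiv.Perm.inv_eq_iff_eq, ← zero_add b, hb, ext0_zero, zero_add]
  apply ext0_injective
  ext1 x
  rw [ext0_toricMap_one_apply, hb1, hb, add_sub_cancel_right]

theorem toricEquiv_apply (h : 1 ≤ n) (π : Equiv.Perm (Fin n)) :
    toricEquiv n h π = toricMap n 1 h π :=
  rfl

theorem exists_ext0_toricEquiv_pow_apply (h : 1 ≤ n) (π : Equiv.Perm (Fin n)) (m : ℕ) :
    ∃ b : Fin (n + 1), ∀ x, ext0 ((toricEquiv n h ^ m) π) x = ext0 π (x + b) - m := by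
  induction m with
  | zero => exact ⟨0, fun x => by simp⟩
  | succ m ih =>
    obtain ⟨b, hb⟩ := ih
    refine ⟨(ext0 ((toricEquiv n h ^ m) π))⁻¹ 1 + b, fun x => ?_⟩
    rw [pow_succ', Equiv.Perm.mul_apply, toricEquiv_apply,
      ext0_toricMap_one_apply, hb, add_assoc]
    push_cast
    ring

theorem toricEquiv_pow_eq_one (h : 1 ≤ n) : toricEquiv n h ^ (n + 1) = 1 := by
  ext1 π
  obtain ⟨b, hb⟩ := exists_ext0_toricEquiv_pow_apply h π (n + 1)
  have hb0 : b = 0 := by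
    have := hb 0
    rw [ext0_zero, Fin.natCast_self, sub_zero, zero_add] at this
    exact (ext0 π).injective (by rw [← this, ext0_zero])
  apply ext0_injective
  ext1 x
  rw [hb, hb0, add_zero, Fin.natCast_self, sub_zero, Equiv.Perm.one_apply]

theorem revEquiv_mul_self : revEquiv n * revEquiv n = 1 :=
  Equiv.ext revMap_revMap

theorem toricMap_revMap_toricMap_revMap (h : 1 ≤ n) (π : Equiv.Perm (Fin n)) :
    toricMap n 1 h (revMap (toricMap n 1 h (revMap π))) = π := by
  set c := (ext0 (revMap π))⁻¹ 1
  refine toricMap_one_eq_of_ext0 h c fun x => ?_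
  rw [ext0_revMap_apply, ext0_toricMap_one_apply, ext0_revMap_apply,
    show -(-(x + c) + c) = x by ring]
  ring

theorem revEquiv_mul_toricEquiv_mul_revEquiv (h : 1 ≤ n) :
    revEquiv n * toricEquiv n h * revEquiv n = (toricEquiv n h)⁻¹ :=
  eq_inv_of_mul_eq_one_right (Equiv.ext (toricMap_revMap_toricMap_revMap h))

end ToricMap

section CutPoints

structure CutPoints (n : ℕ) where
  i : ℕ
  j : ℕ
  k : ℕ
  hij : i < j
  hjk : j < k
  hkn : k ≤ n

variable {n : ℕ}

def CutPoints.perm (c : CutPoints n) : Equiv.Perm (Fin n) :=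
  blockT n c.i c.j c.k c.hij c.hjk c.hkn

def CutPoints.toric : CutPoints n → CutPoints n
  | ⟨i, j, k, hij, hjk, hkn⟩ =>
    -- the cut point `0` moves to `-1 ≡ n` and becomes the largest one
    if hi : i = 0 then ⟨j - 1, k - 1, n, by omega, by omega, le_rfl⟩
    else ⟨i - 1, j - 1, k - 1, by omega, by omega, by omega⟩

def CutPoints.rev : CutPoints n → CutPoints n
  | ⟨i, j, k, hij, hjk, hkn⟩ => ⟨n - k, n - j, n - i, by omega, by omega, by omega⟩

theorem ext0_blockT_val {i j k : ℕ} (hij : i < j) (hjk : j < k) (hkn : k ≤ n)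
    (y : Fin (n + 1)) : (ext0 (blockT n i j k hij hjk hkn) y).val = btFun i j k y.val := by
  cases y using Fin.cases with
  | zero => simp [ext0_zero, btFun]
  | succ t =>
    have := btFun_lb (i := i) (j := j) (k := k) (Nat.le_add_left 1 t.val)
    simp only [ext0_succ, Fin.val_succ, blockT, Equiv.coe_fn_mk]
    omega

theorem Nat.mod_succ_eq_ite {a : ℕ} (h : a ≤ 2 * n + 1) :
    a % (n + 1) = if a ≤ n then a else a - (n + 1) := by
  split_ifs with ha
  · exact Nat.mod_eq_of_lt (by omega)
  · rw [Nat.mod_eq_sub_mod (by omega), Nat.mod_eq_of_lt (by omega)]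

open Fin.NatCast in
theorem toricMap_blockT_eq (h : 1 ≤ n) {i j k i' j' k' : ℕ} (hij : i < j) (hjk : j < k)
    (hkn : k ≤ n) (hij' : i' < j') (hjk' : j' < k') (hkn' : k' ≤ n) (b : ℕ) (hb : b ≤ n)
    (hval : ∀ x ≤ n, btFun i j k ((x + b) % (n + 1)) = (btFun i' j' k' x + 1) % (n + 1)) :
    toricMap n 1 h (blockT n i j k hij hjk hkn) = blockT n i' j' k' hij' hjk' hkn' := by
  refine toricMap_one_eq_of_ext0 h b fun x => Fin.ext ?_
  rw [ext0_blockT_val, Fin.val_add, Fin.val_add, ext0_blockT_val, Fin.val_cast_of_lt (by omega),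
    Fin.val_one', Nat.mod_eq_of_lt (by omega : 1 < n + 1)]
  exact hval x.val (by omega)

theorem CutPoints.toricMap_perm (h : 1 ≤ n) (c : CutPoints n) :
    toricMap n 1 h c.perm = c.toric.perm := by
  obtain ⟨i, j, k, hij, hjk, hkn⟩ := c
  by_cases hi : i = 0
  · subst hi
    simp only [toric, perm, dif_pos]
    -- `σ(0, j, k)` sends position `k - j + 1` to `1`
    refine toricMap_blockT_eq h _ _ _ _ _ _ (k - j + 1) (by omega) fun x hx => ?_
    have := btFun_ub (i := j - 1) (j := k - 1) hx (by omega) le_rfl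
    rw [Nat.mod_succ_eq_ite (by omega), Nat.mod_succ_eq_ite (by omega)]
    unfold btFun
    split_ifs <;> omega
  · simp only [toric, perm, dif_neg hi]
    refine toricMap_blockT_eq h _ _ _ _ _ _ 1 h fun x hx => ?_
    have := btFun_ub (i := i - 1) (j := j - 1) hx (by omega) (by omega : k - 1 ≤ n)
    rw [Nat.mod_succ_eq_ite (by omega), Nat.mod_succ_eq_ite (by omega)]
    unfold btFun
    split_ifs <;> omega

theorem CutPoints.revMap_perm (c : CutPoints n) : revMap c.perm = c.rev.perm := by
  obtain ⟨i, j, k, hij, hjk, hkn⟩ := c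
  ext t
  have ht := t.isLt
  simp only [rev, perm, revMap, Equiv.Perm.mul_apply, wrev, blockT, Equiv.coe_fn_mk]
  unfold btFun
  split_ifs <;> omega

theorem eq_of_btFun_eq {i j k i' j' k' : ℕ} (hij : i < j) (hjk : j < k) (hij' : i' < j')
    (hjk' : j' < k') (h : ∀ t, 1 ≤ t → btFun i j k t = btFun i' j' k' t) :
    i = i' ∧ j = j' ∧ k = k' := by
  have hi : i = i' := by
    have h1 := h (i + 1) (by omega)
    have h2 := h (i' + 1) (by omega)
    unfold btFun at h1 h2
    split_ifs at h1 h2 <;> omega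
  subst hi
  have hj : j = j' := by
    have h1 := h (i + 1) (by omega)
    unfold btFun at h1
    split_ifs at h1 <;> omega
  subst hj
  have h1 := h k (by omega)
  have h2 := h k' (by omega)
  unfold btFun at h1 h2
  refine ⟨rfl, rfl, ?_⟩
  split_ifs at h1 h2 <;> omega

theorem CutPoints.perm_injective : Function.Injective (CutPoints.perm (n := n)) := by
  rintro ⟨i, j, k, hij, hjk, hkn⟩ ⟨i', j', k', hij', hjk', hkn'⟩ h
  obtain ⟨rfl, rfl, rfl⟩ := eq_of_btFun_eq hij hjk hij' hjk' fun t ht => by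
    by_cases htn : t ≤ n
    · have := congrArg (fun σ : Equiv.Perm (Fin n) => (σ ⟨t - 1, by omega⟩).val) h
      have h1 := btFun_lb (i := i) (j := j) (k := k) ht
      have h2 := btFun_lb (i := i') (j := j') (k := k') ht
      simp only [perm, blockT, Equiv.coe_fn_mk, Nat.sub_add_cancel ht] at this
      omega
    · unfold btFun; split_ifs <;> omega
  rfl

end CutPoints

section Vertices

variable {n : ℕ}

-- Indices `m > n` fall into the last branch; only `m ≤ n` is ever used.
def vertexCuts (n : ℕ) (hn : 5 ≤ n) : ℕ → Bool → CutPoints n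
  | m, false =>
    if h : m ≤ n - 3 then ⟨m, m + 1, m + 3, by omega, by omega, by omega⟩
    else if m = n - 2 then ⟨0, n - 2, n - 1, by omega, by omega, by omega⟩
    else if m = n - 1 then ⟨1, n - 1, n, by omega, by omega, le_rfl⟩
    else ⟨0, 2, n, by omega, by omega, le_rfl⟩
  | m, true =>
    if h : m ≤ n - 3 then ⟨m, m + 2, m + 3, by omega, by omega, by omega⟩
    else if m = n - 2 then ⟨0, n - 2, n, by omega, by omega, le_rfl⟩
    else if m = n - 1 then ⟨0, 1, n - 1, by omega, by omega, by omega⟩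
    else ⟨1, 2, n, by omega, by omega, le_rfl⟩

theorem vertexCuts_succ_toric (hn : 5 ≤ n) {k : ℕ} (hk : k < n) (s : Bool) :
    (vertexCuts n hn (k + 1) s).toric = vertexCuts n hn k s := by
  cases s <;> simp only [vertexCuts] <;> split_ifs <;> simp only [CutPoints.toric] <;>
    split_ifs <;> (try contradiction) <;> simp only [CutPoints.mk.injEq, true_and, and_true] <;>
    omega

theorem vertexCuts_zero_toric (hn : 5 ≤ n) (s : Bool) :
    (vertexCuts n hn 0 s).toric = vertexCuts n hn n s := by
  cases s <;> simp only [vertexCuts] <;> split_ifs <;> simp only [CutPoints.toric] <;>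
    split_ifs <;> (try contradiction) <;> simp only [CutPoints.mk.injEq, true_and, and_true] <;>
    omega

theorem vertexCuts_rev_of_le (hn : 5 ≤ n) {k : ℕ} (hk : k ≤ n - 3) (s : Bool) :
    (vertexCuts n hn k s).rev = vertexCuts n hn (n - 3 - k) (!s) := by
  cases s <;> simp only [vertexCuts, Bool.not_false, Bool.not_true] <;> split_ifs <;>
    simp only [CutPoints.rev, CutPoints.mk.injEq] <;> omega

theorem vertexCuts_rev_of_lt (hn : 5 ≤ n) {k : ℕ} (hk : n - 3 < k) (hkn : k ≤ n) (s : Bool) :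
    (vertexCuts n hn k s).rev = vertexCuts n hn (2 * n - 2 - k) (!s) := by
  cases s <;> simp only [vertexCuts, Bool.not_false, Bool.not_true] <;> split_ifs <;>
    simp only [CutPoints.rev, CutPoints.mk.injEq, true_and, and_true] <;> omega

theorem vertexCuts_inj (hn : 5 ≤ n) {k k' : ℕ} (hk : k ≤ n) (hk' : k' ≤ n) {s s' : Bool}
    (h : vertexCuts n hn k s = vertexCuts n hn k' s') : k = k' ∧ s = s' := by
  cases s <;> cases s' <;> simp only [vertexCuts] at h <;> split_ifs at h <;>
    simp only [CutPoints.mk.injEq, true_and, and_true] at h ⊢ <;> omega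

theorem epair_eq (hn : 5 ≤ n) {m : ℕ} (hm : m ≤ n) :
    epair n hn m hm = {(vertexCuts n hn m false).perm, (vertexCuts n hn m true).perm} := by
  unfold epair
  simp only [vertexCuts]
  split_ifs <;> rfl

def vertexLabel (n : ℕ) (hn : 5 ≤ n) (p : ZMod (n + 1) × Bool) : Equiv.Perm (Fin n) :=
  (vertexCuts n hn p.1.val p.2).perm

theorem vertexLabel_natCast (hn : 5 ≤ n) {k : ℕ} (hk : k ≤ n) (s : Bool) :
    vertexLabel n hn (k, s) = (vertexCuts n hn k s).perm := by
  rw [vertexLabel, ZMod.val_cast_of_lt (Nat.lt_succ_of_le hk)]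

theorem ZMod.exists_natCast_eq (m : ZMod (n + 1)) : ∃ k ≤ n, (k : ZMod (n + 1)) = m :=
  ⟨m.val, Nat.le_of_lt_succ (ZMod.val_lt m), ZMod.natCast_zmod_val m⟩

theorem toricEquiv_vertexLabel (h : 1 ≤ n) (hn : 5 ≤ n) (m : ZMod (n + 1)) (s : Bool) :
    toricEquiv n h (vertexLabel n hn (m, s)) = vertexLabel n hn (m - 1, s) := by
  obtain ⟨k, hk, rfl⟩ := ZMod.exists_natCast_eq m
  rw [toricEquiv_apply, vertexLabel_natCast hn hk, CutPoints.toricMap_perm]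
  cases k with
  | zero =>
    have hn1 : ((n : ℕ) : ZMod (n + 1)) = 0 - 1 := by
      rw [zero_sub, eq_neg_iff_add_eq_zero, ZMod.natCast_self']
    rw [vertexCuts_zero_toric, Nat.cast_zero, ← hn1, vertexLabel_natCast hn le_rfl]
  | succ k =>
    rw [vertexCuts_succ_toric hn hk, Nat.cast_succ, add_sub_cancel_right,
      vertexLabel_natCast hn (by omega)]

theorem revEquiv_vertexLabel (hn : 5 ≤ n) (m : ZMod (n + 1)) (s : Bool) :
    revEquiv n (vertexLabel n hn (m, s)) = vertexLabel n hn ((n - 3 : ℕ) - m, !s) := by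
  obtain ⟨k, hk, rfl⟩ := ZMod.exists_natCast_eq m
  change revMap _ = _
  rw [vertexLabel_natCast hn hk, CutPoints.revMap_perm]
  by_cases hk3 : k ≤ n - 3
  · rw [vertexCuts_rev_of_le hn hk3, ← Nat.cast_sub hk3, vertexLabel_natCast hn (by omega)]
  · have hcast : ((n - 3 : ℕ) : ZMod (n + 1)) - k = (2 * n - 2 - k : ℕ) := by
      rw [sub_eq_iff_eq_add, ← Nat.cast_add, show 2 * n - 2 - k + k = n - 3 + (n + 1) by omega,
        Nat.cast_add, ZMod.natCast_self, add_zero]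
    rw [vertexCuts_rev_of_lt hn (by omega) hk, hcast, vertexLabel_natCast hn (by omega)]

theorem vertexLabel_injective (hn : 5 ≤ n) : Function.Injective (vertexLabel n hn) := by
  rintro ⟨m, s⟩ ⟨m', s'⟩ h
  obtain ⟨hm, rfl⟩ := vertexCuts_inj hn (Nat.le_of_lt_succ (ZMod.val_lt m))
    (Nat.le_of_lt_succ (ZMod.val_lt m')) (CutPoints.perm_injective h)
  rw [ZMod.val_injective _ hm]

theorem Vset_eq_range_vertexLabel (hn : 5 ≤ n) : Vset n hn = Set.range (vertexLabel n hn) := by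
  ext π
  constructor
  · rintro ⟨m, hm, hπ⟩
    rw [epair_eq hn hm] at hπ
    rcases hπ with rfl | rfl
    exacts [⟨(m, false), vertexLabel_natCast hn hm false⟩,
      ⟨(m, true), vertexLabel_natCast hn hm true⟩]
  · rintro ⟨⟨m, s⟩, rfl⟩
    refine ⟨m.val, Nat.le_of_lt_succ (ZMod.val_lt m), ?_⟩
    rw [epair_eq]
    cases s
    exacts [Or.inl rfl, Or.inr rfl]

end Vertices

/-- For `n ≥ 5`, the set `V` is invariant under the toric-reverse
group `D_{n+1}`, and `D_{n+1}` acts sharply transitively on `V`. -/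
theorem stmt_16 (n : ℕ) (hn : 5 ≤ n) :
    (∀ d ∈ toricReverseGroup n (by omega), ∀ v ∈ Vset n hn, d v ∈ Vset n hn) ∧
    (∀ u ∈ Vset n hn, ∀ v ∈ Vset n hn,
      ∃! d : toricReverseGroup n (by omega : 1 ≤ n),
        (d : Equiv.Perm (Equiv.Perm (Fin n))) u = v) := by
  have h : 1 ≤ n := by omega
  have hf := toricEquiv_pow_eq_one h
  have hgf := revEquiv_mul_toricEquiv_mul_revEquiv h
  have hvf := toricEquiv_vertexLabel h hn
  have hvg := revEquiv_vertexLabel hn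
  rw [Vset_eq_range_vertexLabel hn]
  exact ⟨fun d hd x hx => smul_mem_range_of_mem_closure_pair revEquiv_mul_self hgf hvf hvg hd hx,
    fun x hx y hy => existsUnique_mem_closure_pair_smul_eq hf revEquiv_mul_self hgf hvf hvg
      (vertexLabel_injective hn) hx hy⟩
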